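/- arXiv:2106.05602 — 4 statements merged into one kernel-verified Lean document; each statement's English description precedes it below -/
import Mathlib

section
/- For every G : (ℕ → Bool) → ℕ there exist finitely many f₀, …, f_k ∈ 2^ℕ such that for every g ∈ 2^ℕ there is i ≤ k with g agreeing with f_i on the first G(f_i) coordinates. -/
open Topology

theorem CompactSpace.exists_fin_succ_subcover {X : Type*} [TopologicalSpace X] [CompactSpace X]
    [Nonempty X] (U : X → Set X) (hU : ∀ x, U x ∈ 𝓝 x) :
    ∃ (k : ℕ) (f : Fin (k + 1) → X), ∀ y, ∃ i, y ∈ U (f i) := by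
  obtain ⟨t, ht⟩ := CompactSpace.elim_nhds_subcover U hU
  -- a leading arbitrary point pads the enumeration of `t`, which may be empty
  refine ⟨t.card, Fin.cons (Classical.arbitrary X) fun i => (t.equivFin.symm i : X), fun y => ?_⟩
  obtain ⟨x, hxt, hyx⟩ := Set.mem_iUnion₂.1 (ht.ge (Set.mem_univ y))
  exact ⟨(t.equivFin ⟨x, hxt⟩).succ, by simpa using hyx⟩

theorem isOpen_setOf_forall_lt_eq {α : Type*} [TopologicalSpace α] [DiscreteTopology α]
    (f : ℕ → α) (n : ℕ) : IsOpen {g : ℕ → α | ∀ m < n, g m = f m} :=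
  isOpen_set_pi (s := fun m => {f m}) (Set.finite_lt_nat n) fun _ _ => isOpen_discrete _

/-- HBU for Cantor space: the cover of `2^ℕ` by basic clopen sets `[f ↾ G f]`
has a finite subcover. -/
theorem stmt_1 (G : (ℕ → Bool) → ℕ) :
    ∃ (k : ℕ) (f : Fin (k + 1) → (ℕ → Bool)),
      ∀ g : ℕ → Bool, ∃ i, ∀ m < G (f i), g m = f i m :=
  CompactSpace.exists_fin_succ_subcover (fun f => {g | ∀ m < G f, g m = f m})
    fun f => (isOpen_setOf_forall_lt_eq f (G f)).mem_nhds fun _ _ => rfl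
end

section
/- Let E ⊂ [0,1] be closed of Lebesgue measure zero, ε > 0, and (I_n) a sequence of open intervals with E ⊆ ∪_n I_n and Σ_n |I_n| < ε/2. Let Ψ : [0,1] → ℝ⁺ be continuous on [0,1]\E. Then [0,1] ⊆ (∪_{q ∈ ℚ∩[0,1], q∉E} (q − Ψ(q), q + Ψ(q))) ∪ (∪_n I_n). -/
open MeasureTheory Metric Filter Set Topology

/-!
A point of `[0,1]` lying in `E` is covered by some `I n`. A point `x ∉ E` has a neighbourhood
missing the closed set `E` on which `Ψ > Ψ x / 2`; a rational `q ∈ [0,1]` within `Ψ x / 2` of `x`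
then lies off `E` and satisfies `|x - q| < Ψ x / 2 < Ψ q`.
-/

theorem Icc_subset_closure_inter_range_ratCast {𝕜 : Type*} [Field 𝕜] [LinearOrder 𝕜]
    [IsStrictOrderedRing 𝕜] [TopologicalSpace 𝕜] [OrderTopology 𝕜] [Archimedean 𝕜]
    {a b : 𝕜} (hab : a < b) :
    Icc a b ⊆ closure (Icc a b ∩ range ((↑) : ℚ → 𝕜)) := by
  calc Icc a b = closure (Ioo a b) := (closure_Ioo hab.ne).symm
    _ ⊆ closure (Ioo a b ∩ range ((↑) : ℚ → 𝕜)) :=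
      closure_minimal (Rat.denseRange_cast.open_subset_closure_inter isOpen_Ioo) isClosed_closure
    _ ⊆ closure (Icc a b ∩ range ((↑) : ℚ → 𝕜)) :=
      closure_mono (inter_subset_inter_left _ Ioo_subset_Icc_self)

theorem exists_mem_inter_mem_ball_of_continuousWithinAt {α : Type*} [PseudoMetricSpace α]
    {s t U : Set α} {Ψ : α → ℝ} {x : α} (hxU : x ∈ U) (hU : IsOpen U) (hts : t ⊆ s)
    (hxt : x ∈ closure t) (hΨ : ContinuousWithinAt Ψ s x) (hΨx : 0 < Ψ x) :
    ∃ q ∈ t ∩ U, x ∈ ball q (Ψ q) := by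
  have := mem_closure_iff_nhdsWithin_neBot.1 hxt
  have hlarge : ∀ᶠ y in 𝓝[t] x, Ψ x / 2 < Ψ y :=
    nhdsWithin_mono x hts (hΨ.eventually (lt_mem_nhds (half_lt_self hΨx)))
  have hnear : ∀ᶠ y in 𝓝[t] x, y ∈ U ∧ dist y x < Ψ x / 2 :=
    nhdsWithin_le_nhds (Eventually.and (hU.mem_nhds hxU) (ball_mem_nhds x (half_pos hΨx)))
  have hmem : ∀ᶠ y in 𝓝[t] x, y ∈ t := self_mem_nhdsWithin
  obtain ⟨q, hqt, hqΨ, hqU, hqx⟩ := (hmem.and (hlarge.and hnear)).exists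
  exact ⟨q, ⟨hqt, hqU⟩, by rw [mem_ball, dist_comm]; linarith⟩

theorem stmt_12_general (E : Set ℝ) (hEc : IsClosed E)
    (I : ℕ → ℝ × ℝ)
    (hEI : E ⊆ ⋃ n, Set.Ioo (I n).1 (I n).2)
    (Ψ : ℝ → ℝ) (hΨ : ∀ x ∈ Set.Icc (0:ℝ) 1, 0 < Ψ x)
    (hcont : ∀ x ∈ Set.Icc (0:ℝ) 1 \ E, ContinuousWithinAt Ψ (Set.Icc 0 1) x) :
    Set.Icc (0:ℝ) 1 ⊆
      (⋃ q ∈ {q : ℚ | (q : ℝ) ∈ Set.Icc (0:ℝ) 1 \ E},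
        Set.Ioo ((q : ℝ) - Ψ q) ((q : ℝ) + Ψ q)) ∪
      ⋃ n, Set.Ioo (I n).1 (I n).2 := by
  intro x hx
  by_cases hxE : x ∈ E
  · exact Or.inr (hEI hxE)
  obtain ⟨_, ⟨⟨hq01, q, rfl⟩, hqE⟩, hxq⟩ :=
    exists_mem_inter_mem_ball_of_continuousWithinAt hxE hEc.isOpen_compl inter_subset_left
      (Icc_subset_closure_inter_range_ratCast zero_lt_one hx) (hcont x ⟨hx, hxE⟩) (hΨ x hx)
  rw [Real.ball_eq_Ioo] at hxq
  exact Or.inl (mem_biUnion (x := q) ⟨hq01, hqE⟩ hxq)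

/-- Key covering lemma: the rational-centered canonical intervals off `E` together
with a covering of `E` by small intervals cover all of `[0,1]`. -/
theorem stmt_12 (E : Set ℝ) (hE : E ⊆ Set.Icc 0 1) (hEc : IsClosed E)
    (hE0 : volume E = 0) (ε : ℝ) (hε : 0 < ε) (I : ℕ → ℝ × ℝ)
    (hEI : E ⊆ ⋃ n, Set.Ioo (I n).1 (I n).2)
    (hIlen : ∑' n : ℕ, ((I n).2 - (I n).1) < ε / 2)
    (Ψ : ℝ → ℝ) (hΨ : ∀ x ∈ Set.Icc (0:ℝ) 1, 0 < Ψ x)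
    (hcont : ∀ x ∈ Set.Icc (0:ℝ) 1 \ E, ContinuousWithinAt Ψ (Set.Icc 0 1) x) :
    Set.Icc (0:ℝ) 1 ⊆
      (⋃ q ∈ {q : ℚ | (q : ℝ) ∈ Set.Icc (0:ℝ) 1 \ E},
        Set.Ioo ((q : ℝ) - Ψ q) ((q : ℝ) + Ψ q)) ∪
      ⋃ n, Set.Ioo (I n).1 (I n).2 :=
  stmt_12_general E hEc I hEI Ψ hΨ hcont
end

section
/- Assume: (i) WHBU⁺: for every Ψ : [0,1] → ℝ⁺ there is a sequence (y_n) with [0,1] \ ∪_n (y_n − Ψ(y_n), y_n + Ψ(y_n)) countable; (ii) HBC₀: every countable collection of open intervals covering [0,1] has a finite subcollection covering [0,1]. Then HBU holds: every canonical cover ∪_{x∈[0,1]}(x − Ψ(x), x + Ψ(x)) of [0,1] has a finite subcover. -/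
/-!
Let `(y n)` be the sequence that WHBU⁺ gives for `Ψ`, and `B` the countable set of points of
`[0,1]` left uncovered by its intervals. The intervals centred at the points of the countable set
`B ∪ range y` cover `[0,1]`, so HBC₀ extracts finitely many of them, and their centres are a
finite subcover of the canonical cover.
-/

open Set

lemma Finset.exists_fin_succ_enum {α : Type*} {s : Set α} {t : Finset α} {a : α}
    (hts : ↑t ⊆ s) (ha : a ∈ s) :
    ∃ (k : ℕ) (y : Fin (k + 1) → α), (∀ i, y i ∈ s) ∧ ∀ x ∈ t, ∃ i, y i = x := by
  refine ⟨t.card, Fin.cons a fun i => (t.equivFin.symm i : α), ?_, fun x hx => ?_⟩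
  · refine Fin.cases ha fun i => ?_
    simpa only [Fin.cons_succ] using hts (t.equivFin.symm i).2
  · refine ⟨(t.equivFin ⟨x, hx⟩).succ, ?_⟩
    simp only [Fin.cons_succ, Equiv.symm_apply_apply]

lemma subset_biUnion_diff_iUnion_union_range {s : Set ℝ} {Ψ : ℝ → ℝ}
    (hΨ : ∀ x ∈ s, 0 < Ψ x) (y : ℕ → ℝ) :
    s ⊆ ⋃ c ∈ (s \ ⋃ n, Ioo (y n - Ψ (y n)) (y n + Ψ (y n))) ∪ range y,
      Ioo (c - Ψ c) (c + Ψ c) := by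
  intro x hx
  by_cases hxy : x ∈ ⋃ n, Ioo (y n - Ψ (y n)) (y n + Ψ (y n))
  · obtain ⟨n, hxn⟩ := mem_iUnion.1 hxy
    exact mem_biUnion (Or.inr (mem_range_self n)) hxn
  · have := hΨ x hx
    exact mem_biUnion (Or.inl ⟨hx, hxy⟩) ⟨by linarith, by linarith⟩

lemma exists_finset_centers_of_countable {s C : Set ℝ} (Ψ : ℝ → ℝ)
    (hbc : ∀ A : Set (ℝ × ℝ), A.Countable → (∀ x ∈ s, ∃ p ∈ A, x ∈ Ioo p.1 p.2) →
      ∃ t : Finset (ℝ × ℝ), ↑t ⊆ A ∧ ∀ x ∈ s, ∃ p ∈ t, x ∈ Ioo p.1 p.2)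
    (hC : C.Countable) (hcov : s ⊆ ⋃ c ∈ C, Ioo (c - Ψ c) (c + Ψ c)) :
    ∃ t : Finset ℝ, ↑t ⊆ C ∧ s ⊆ ⋃ c ∈ t, Ioo (c - Ψ c) (c + Ψ c) := by
  classical
  set f : ℝ → ℝ × ℝ := fun c => (c - Ψ c, c + Ψ c)
  have hA : ∀ x ∈ s, ∃ p ∈ f '' C, x ∈ Ioo p.1 p.2 := fun x hx => by
    obtain ⟨c, hc, hxc⟩ := mem_iUnion₂.1 (hcov hx)
    exact ⟨f c, mem_image_of_mem f hc, hxc⟩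
  obtain ⟨u, huA, hu⟩ := hbc _ (hC.image f) hA
  obtain ⟨t, htC, rfl⟩ := Finset.subset_set_image_iff.1 huA
  refine ⟨t, htC, fun x hx => ?_⟩
  obtain ⟨p, hp, hxp⟩ := hu x hx
  obtain ⟨c, hc, rfl⟩ := Finset.mem_image.1 hp
  exact mem_biUnion hc hxp

/-- WHBU⁺ together with HBC₀ implies HBU. -/
theorem stmt_14
    (whbu : ∀ Ψ : ℝ → ℝ, (∀ x ∈ Set.Icc (0:ℝ) 1, 0 < Ψ x) →
      ∃ y : ℕ → ℝ, (∀ n, y n ∈ Set.Icc (0:ℝ) 1) ∧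
        (Set.Icc (0:ℝ) 1 \ ⋃ n, Set.Ioo (y n - Ψ (y n)) (y n + Ψ (y n))).Countable)
    (hbc : ∀ A : Set (ℝ × ℝ), A.Countable →
      (∀ x ∈ Set.Icc (0:ℝ) 1, ∃ p ∈ A, x ∈ Set.Ioo p.1 p.2) →
      ∃ s : Finset (ℝ × ℝ), ↑s ⊆ A ∧
        ∀ x ∈ Set.Icc (0:ℝ) 1, ∃ p ∈ s, x ∈ Set.Ioo p.1 p.2) :
    ∀ Ψ : ℝ → ℝ, (∀ x ∈ Set.Icc (0:ℝ) 1, 0 < Ψ x) →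
      ∃ (k : ℕ) (y : Fin (k + 1) → ℝ), (∀ i, y i ∈ Set.Icc (0:ℝ) 1) ∧
        ∀ x ∈ Set.Icc (0:ℝ) 1, ∃ i, x ∈ Set.Ioo (y i - Ψ (y i)) (y i + Ψ (y i)) := by
  intro Ψ hΨ
  obtain ⟨y, hy, hB⟩ := whbu Ψ hΨ
  obtain ⟨t, htC, ht⟩ := exists_finset_centers_of_countable Ψ hbc
    (hB.union (countable_range y)) (subset_biUnion_diff_iUnion_union_range hΨ y)
  have hC : (Icc (0:ℝ) 1 \ ⋃ n, Ioo (y n - Ψ (y n)) (y n + Ψ (y n))) ∪ range y ⊆ Icc 0 1 :=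
    union_subset sdiff_subset (range_subset_iff.2 hy)
  obtain ⟨k, z, hz, htz⟩ :=
    Finset.exists_fin_succ_enum (htC.trans hC) (left_mem_Icc.2 zero_le_one)
  refine ⟨k, z, hz, fun x hx => ?_⟩
  obtain ⟨c, hc, hxc⟩ := mem_iUnion₂.1 (ht hx)
  obtain ⟨i, rfl⟩ := htz c hc
  exact ⟨i, hxc⟩
end

section
/- Vitali covering theorem for countable covers: let (I_n)_{n∈ℕ} be a sequence of open intervals forming a Vitali cover of [0,1] (i.e., for every x ∈ [0,1] and every δ > 0 there is n with x ∈ I_n and |I_n| < δ). Then for every ε > 0 there exist finitely many pairwise disjoint intervals I_{n₀}, …, I_{n_k} from the sequence whose total length exceeds 1 − ε... equivalently, there is a subsequence of pairwise disjoint intervals covering [0,1] up to a set of Lebesgue measure zero. -/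
/-!
Indexed by pairs (interval, point of it), the closed intervals lying in `(0,1)` are closed sets
of comparable size around their centres, so the general Vitali covering theorem yields pairwise
disjoint closed intervals inside `(0,1)` covering it up to a null set. Finitely many of them
cannot do this, since `(0,1)` minus a finite union of closed intervals is a non-empty open set;
so they form an infinite sequence. Endpoints are null, so the open intervals of this sequence
cover `[0,1]` almost everywhere, and then the partial sums of their lengths exceed every number
below `1`.
-/

open MeasureTheory Set Filter Function

theorem Real.exists_pairwiseDisjoint_Icc_subset_measure_diff_eq_zero {ι : Type*} {U : Set ℝ}
    (hU : IsOpen U) (I : ι → ℝ × ℝ)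
    (hV : ∀ x ∈ U, ∀ δ > (0:ℝ),
      ∃ n, x ∈ Ioo (I n).1 (I n).2 ∧ (I n).2 - (I n).1 < δ) :
    ∃ u : Set ι, (∀ n ∈ u, (I n).1 < (I n).2 ∧ Icc (I n).1 (I n).2 ⊆ U) ∧
      u.PairwiseDisjoint (fun n => Icc (I n).1 (I n).2) ∧
      volume (U \ ⋃ n ∈ u, Icc (I n).1 (I n).2) = 0 := by
  set t : Set (ι × ℝ) := {p | p.2 ∈ Ioo (I p.1).1 (I p.1).2 ∧ Icc (I p.1).1 (I p.1).2 ⊆ U}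
  have hball : ∀ p ∈ t,
      Icc (I p.1).1 (I p.1).2 ⊆ Metric.closedBall p.2 ((I p.1).2 - (I p.1).1) :=
    fun p hp z hz => Real.dist_le_of_mem_Icc hz (Ioo_subset_Icc_self hp.1)
  obtain ⟨u, hut, -, hu_disj, hu_null⟩ := Vitali.exists_disjoint_covering_ae volume U t 6
    (fun p => (I p.1).2 - (I p.1).1) Prod.snd (fun p => Icc (I p.1).1 (I p.1).2) hball
    (fun p _ => by
      rw [Real.volume_closedBall, Real.volume_Icc,
        show 2 * (3 * ((I p.1).2 - (I p.1).1)) = 6 * ((I p.1).2 - (I p.1).1) by ring,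
        ENNReal.ofReal_mul (by norm_num)]
      norm_num)
    (fun p hp => by rw [interior_Icc]; exact ⟨p.2, hp.1⟩)
    (fun _ _ => isClosed_Icc)
    (fun x hx ε hε => by
      obtain ⟨ρ, hρ, hρU⟩ := Metric.isOpen_iff.mp hU x hx
      obtain ⟨n, hxn, hlen⟩ := hV x hx (min ε ρ) (lt_min hε hρ)
      refine ⟨(n, x), ⟨hxn, fun z hz => hρU ?_⟩, (hlen.trans_le (min_le_left _ _)).le, rfl⟩
      exact (Real.dist_le_of_mem_Icc hz (Ioo_subset_Icc_self hxn)).trans_lt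
        (hlen.trans_le (min_le_right _ _)))
  refine ⟨Prod.fst '' u, ?_, ?_, by rwa [biUnion_image]⟩
  · rintro _ ⟨p, hp, rfl⟩
    exact ⟨(hut hp).1.1.trans (hut hp).1.2, (hut hp).2⟩
  · rintro _ ⟨p, hp, rfl⟩ _ ⟨q, hq, rfl⟩ hpq
    exact hu_disj hp hq (ne_of_apply_ne Prod.fst hpq)

theorem Set.infinite_of_measure_diff_biUnion_eq_zero {X ι : Type*} [TopologicalSpace X]
    [T2Space X] [MeasurableSpace X] {μ : Measure X} [μ.IsOpenPosMeasure] {U : Set X}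
    (hU : IsOpen U) (hUc : ¬IsCompact U) {u : Set ι} {K : ι → Set X}
    (hK : ∀ i ∈ u, IsCompact (K i)) (hKU : ∀ i ∈ u, K i ⊆ U)
    (hu : μ (U \ ⋃ i ∈ u, K i) = 0) : u.Infinite := by
  intro hfin
  have hopen : IsOpen (U \ ⋃ i ∈ u, K i) :=
    hU.sdiff (hfin.isClosed_biUnion fun i hi => (hK i hi).isClosed)
  have hcover : U = ⋃ i ∈ u, K i :=
    (sdiff_eq_empty.mp ((hopen.measure_eq_zero_iff μ).mp hu)).antisymm (iUnion₂_subset hKU)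
  exact hUc (hcover ▸ hfin.isCompact_biUnion hK)

theorem Real.eventually_lt_sum_range_of_measure_diff_iUnion_Ioo_eq_zero {s : Set ℝ}
    {a b : ℕ → ℝ} (hab : ∀ j, a j ≤ b j)
    (hdisj : Pairwise (Disjoint on fun j => Ioo (a j) (b j)))
    (hs : volume (s \ ⋃ j, Ioo (a j) (b j)) = 0) {r : ℝ} (hr : ENNReal.ofReal r < volume s) :
    ∀ᶠ N in atTop, r < ∑ j ∈ Finset.range N, (b j - a j) := by
  have hcover : volume s ≤ ∑' j, ENNReal.ofReal (b j - a j) := by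
    simp_rw [← Real.volume_Ioo, ← measure_iUnion hdisj fun _ => measurableSet_Ioo]
    exact measure_mono_ae (ae_le_set.2 hs)
  filter_upwards [(tendsto_order.1 (ENNReal.tendsto_nat_tsum _)).1 _ (hr.trans_le hcover)]
    with N hN
  rw [← ENNReal.ofReal_sum_of_nonneg fun j _ => sub_nonneg.2 (hab j)] at hN
  exact (ENNReal.ofReal_lt_ofReal_iff'.1 hN).1

/-- Vitali covering theorem for countable Vitali covers of `[0,1]`: there are finitely
many pairwise disjoint intervals of total length exceeding `1 - ε`, and a pairwise
disjoint subsequence covering `[0,1]` up to measure zero. -/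
theorem stmt_19 (I : ℕ → ℝ × ℝ)
    (hV : ∀ x ∈ Set.Icc (0:ℝ) 1, ∀ δ > (0:ℝ), ∃ n,
      x ∈ Set.Ioo (I n).1 (I n).2 ∧ (I n).2 - (I n).1 < δ) :
    (∀ ε > (0:ℝ), ∃ (k : ℕ) (n : Fin (k + 1) → ℕ),
      (∀ i j, i ≠ j →
        Disjoint (Set.Ioo (I (n i)).1 (I (n i)).2) (Set.Ioo (I (n j)).1 (I (n j)).2)) ∧
      1 - ε < ∑ i, ((I (n i)).2 - (I (n i)).1)) ∧
    ∃ m : ℕ → ℕ,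
      (∀ i j, i ≠ j →
        Disjoint (Set.Ioo (I (m i)).1 (I (m i)).2) (Set.Ioo (I (m j)).1 (I (m j)).2)) ∧
      volume (Set.Icc (0:ℝ) 1 \ ⋃ j, Set.Ioo (I (m j)).1 (I (m j)).2) = 0 := by
  obtain ⟨u, hu_sub, hu_disj, hu_null⟩ :=
    Real.exists_pairwiseDisjoint_Icc_subset_measure_diff_eq_zero isOpen_Ioo I
      fun x hx => hV x (Ioo_subset_Icc_self hx)
  have hu_inf : u.Infinite := infinite_of_measure_diff_biUnion_eq_zero isOpen_Ioo
    (by rw [isCompact_Ioo_iff]; norm_num) (fun _ _ => isCompact_Icc) (fun n hn => (hu_sub n hn).2)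
    hu_null
  set m := Nat.nth (· ∈ u)
  have hm_mem : ∀ j, m j ∈ u := Nat.nth_mem_of_infinite hu_inf
  have hm_disj : ∀ i j, i ≠ j →
      Disjoint (Ioo (I (m i)).1 (I (m i)).2) (Ioo (I (m j)).1 (I (m j)).2) := fun i j hij =>
    (hu_disj (hm_mem i) (hm_mem j) ((Nat.nth_injective hu_inf).ne hij)).mono
      Ioo_subset_Icc_self Ioo_subset_Icc_self
  have hm_null : volume (Icc (0:ℝ) 1 \ ⋃ j, Ioo (I (m j)).1 (I (m j)).2) = 0 := by
    have hm_range : range m = u := Nat.range_nth_of_infinite hu_inf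
    have hIcc : ⋃ j, Icc (I (m j)).1 (I (m j)).2 = ⋃ n ∈ u, Icc (I n).1 (I n).2 := by
      rw [← hm_range, biUnion_range]
    rw [← hu_null, ← hIcc]
    exact measure_congr <| Ioo_ae_eq_Icc.symm.diff <|
      Filter.EventuallyEq.countable_iUnion fun _ => Ioo_ae_eq_Icc
  refine ⟨fun ε hε => ?_, m, hm_disj, hm_null⟩
  have h_lt_volume : ENNReal.ofReal (1 - ε) < volume (Icc (0:ℝ) 1) := by
    rw [Real.volume_Icc, sub_zero]
    exact ENNReal.ofReal_lt_ofReal_iff'.2 ⟨by linarith, one_pos⟩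
  obtain ⟨N, hN⟩ := eventually_atTop.1 <|
    Real.eventually_lt_sum_range_of_measure_diff_iUnion_Ioo_eq_zero
      (fun j => (hu_sub _ (hm_mem j)).1.le) (fun i j => hm_disj i j) hm_null h_lt_volume
  refine ⟨N, fun i => m i, fun i j hij => hm_disj _ _ (Fin.val_injective.ne hij), ?_⟩
  rw [Fin.sum_univ_eq_sum_range (fun j => (I (m j)).2 - (I (m j)).1)]
  exact hN _ N.le_succ
end
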